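/- arXiv:math/0211002 — 3 statements merged into one kernel-verified Lean document; each statement's English description precedes it below -/
import Mathlib

section
/- For every f ∈ 𝒜, the linear functional φ(f) = ∫ f(0,0,r) dr satisfies φ(f* × f) = φ(f × f*) = ‖f‖₂², the square of the L²-norm of f on ℝⁿ × ℝⁿ × ℝ. In particular φ is a faithful positive trace on (𝒜, ×, *). -/
open MeasureTheory
noncomputable section

/-- ℝⁿ -/
abbrev Rn (n : ℕ) := Fin n → ℝ

/-- η_λ(r) = (e^{2λr} − 1)/(2λ) -/
def eta (l r : ℝ) : ℝ := (Real.exp (2 * l * r) - 1) / (2 * l)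

/-- ē(t) = e^{−2πit} -/
def ebar (t : ℝ) : ℂ := Complex.exp (-2 * Real.pi * t * Complex.I)

/-- standard inner product β on ℝⁿ -/
def beta {n : ℕ} (x y : Rn n) : ℝ := ∑ i, x i * y i

/-- membership in 𝒜: Schwartz in (x,y,r), compactly supported in r -/
def IsA {n : ℕ} (f : Rn n → Rn n → ℝ → ℂ) : Prop :=
  (∃ F : SchwartzMap ((Rn n × Rn n) × ℝ) ℂ, ∀ x y r, f x y r = F ((x, y), r)) ∧
  (∃ C : ℝ, ∀ x y r, f x y r ≠ 0 → |r| ≤ C)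

/-- twisted convolution product -/
def tMul {n : ℕ} (l : ℝ) (f g : Rn n → Rn n → ℝ → ℂ) : Rn n → Rn n → ℝ → ℂ :=
  fun x y r => ∫ xt : Rn n, ∫ yt : Rn n,
    f xt yt r * g (x - xt) (y - yt) r * ebar (eta l r * beta xt (y - yt))

/-- twisted involution -/
def tStar {n : ℕ} (l : ℝ) (f : Rn n → Rn n → ℝ → ℂ) : Rn n → Rn n → ℝ → ℂ :=
  fun x y r => (starRingEnd ℂ) (f (-x) (-y) r) * ebar (eta l r * beta x y)

/-- φ(f) = ∫ f(0,0,r) dr -/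
def PhiF {n : ℕ} (f : Rn n → Rn n → ℝ → ℂ) : ℂ := ∫ r : ℝ, f 0 0 r

/-- continuous with compact support (as a function of all variables) -/
def CC {n : ℕ} (ξ : Rn n → Rn n → ℝ → ℂ) : Prop :=
  Continuous (fun p : (Rn n × Rn n) × ℝ => ξ p.1.1 p.1.2 p.2) ∧
  HasCompactSupport (fun p : (Rn n × Rn n) × ℝ => ξ p.1.1 p.1.2 p.2)

/-- L² inner product ⟨f,g⟩ (linear in the first variable, conjugate in the second) -/
def ip {n : ℕ} (f g : Rn n → Rn n → ℝ → ℂ) : ℂ :=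
  ∫ x : Rn n, ∫ y : Rn n, ∫ r : ℝ, f x y r * (starRingEnd ℂ) (g x y r)

/-- the regular representation L_f ξ (same integral formula as the twisted product) -/
def Lop {n : ℕ} (l : ℝ) (f ξ : Rn n → Rn n → ℝ → ℂ) : Rn n → Rn n → ℝ → ℂ :=
  tMul l f ξ

/-!
At the origin the twisted product collapses to
`∫∫ f(x,y,r) g(-x,-y,r) ē(-η_λ(r) β(x,y))`, because `β(x,-y) = -β(x,y)`.
For `g = f*` the phase carried by `f*` cancels this one and the integrand is `|f|²`.
The substitution `(x,y) ↦ (-x,-y)` exchanges the two factors, which gives both the trace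
property and `φ(f* × f) = φ(f × f*)`. Fubini moves the `r`-integral inside, and faithfulness holds
because a continuous function whose squared norm has integral zero vanishes.
-/

lemma ebar_add (s t : ℝ) : ebar (s + t) = ebar s * ebar t := by
  unfold ebar
  rw [← Complex.exp_add]
  push_cast
  ring_nf

lemma ebar_mul_ebar_neg (t : ℝ) : ebar t * ebar (-t) = 1 := by
  rw [← ebar_add, add_neg_cancel]
  simp [ebar]

lemma beta_neg_left {n : ℕ} (x y : Rn n) : beta (-x) y = -beta x y := by
  simp [beta]

lemma beta_neg_right {n : ℕ} (x y : Rn n) : beta x (-y) = -beta x y := by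
  simp [beta]

lemma integral_integral_comp_neg {G H E : Type*} [MeasurableSpace G] [AddGroup G] [MeasurableNeg G]
    [MeasurableSpace H] [AddGroup H] [MeasurableNeg H] [NormedAddCommGroup E] [NormedSpace ℝ E]
    (μ : Measure G) (ν : Measure H) [μ.IsNegInvariant] [ν.IsNegInvariant] (I : G → H → E) :
    ∫ x, ∫ y, I (-x) (-y) ∂ν ∂μ = ∫ x, ∫ y, I x y ∂ν ∂μ := by
  simp_rw [integral_neg_eq_self (I (-_)) ν]
  exact integral_neg_eq_self (fun x => ∫ y, I x y ∂ν) μ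

section TwistedProduct

variable {n : ℕ} (l : ℝ)

lemma tMul_apply_zero_zero (f g : Rn n → Rn n → ℝ → ℂ) (r : ℝ) :
    tMul l f g 0 0 r =
      ∫ x, ∫ y, f x y r * g (-x) (-y) r * ebar (-(eta l r * beta x y)) := by
  simp only [tMul, zero_sub, beta_neg_right, mul_neg]

lemma tMul_apply_zero_zero_comm (f g : Rn n → Rn n → ℝ → ℂ) (r : ℝ) :
    tMul l f g 0 0 r = tMul l g f 0 0 r := by
  rw [tMul_apply_zero_zero, tMul_apply_zero_zero, ← integral_integral_comp_neg]
  simp only [neg_neg, beta_neg_left, beta_neg_right, mul_comm (f _ _ r)]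

lemma tMul_tStar_apply_zero_zero (f : Rn n → Rn n → ℝ → ℂ) (r : ℝ) :
    tMul l f (tStar l f) 0 0 r = ∫ x, ∫ y, ((‖f x y r‖ ^ 2 : ℝ) : ℂ) := by
  rw [tMul_apply_zero_zero]
  congr 1; funext x; congr 1; funext y
  simp only [tStar, neg_neg, beta_neg_left, beta_neg_right]
  rw [← mul_assoc, Complex.mul_conj', mul_assoc, ebar_mul_ebar_neg, mul_one, Complex.ofReal_pow]

lemma tStar_tMul_apply_zero_zero (f : Rn n → Rn n → ℝ → ℂ) (r : ℝ) :
    tMul l (tStar l f) f 0 0 r = ∫ x, ∫ y, ((‖f x y r‖ ^ 2 : ℝ) : ℂ) := by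
  rw [tMul_apply_zero_zero_comm, tMul_tStar_apply_zero_zero]

lemma PhiF_tMul_comm (f g : Rn n → Rn n → ℝ → ℂ) : PhiF (tMul l f g) = PhiF (tMul l g f) := by
  simp only [PhiF, tMul_apply_zero_zero_comm l f g]

end TwistedProduct

section Fubini

variable {α β γ E : Type*} [MeasurableSpace α] [MeasurableSpace β] [MeasurableSpace γ]
  {μ : Measure α} {ν : Measure β} {ρ : Measure γ} [SFinite μ] [SFinite ν] [SFinite ρ]
  [NormedAddCommGroup E] [NormedSpace ℝ E]

lemma integral_prod_prod (G : (α × β) × γ → E) (hG : Integrable G ((μ.prod ν).prod ρ)) :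
    ∫ z, G z ∂(μ.prod ν).prod ρ = ∫ x, ∫ y, ∫ r, G ((x, y), r) ∂ρ ∂ν ∂μ := by
  rw [integral_prod G hG, integral_prod _ hG.integral_prod_left]

lemma integral_prod_prod_symm (G : (α × β) × γ → E) (hG : Integrable G ((μ.prod ν).prod ρ)) :
    ∫ z, G z ∂(μ.prod ν).prod ρ = ∫ r, ∫ x, ∫ y, G ((x, y), r) ∂ν ∂μ ∂ρ := by
  rw [integral_prod_symm G hG]
  refine integral_congr_ae ?_
  filter_upwards [hG.prod_left_ae] with r hr
  exact integral_prod _ hr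

end Fubini

lemma Continuous.eq_zero_of_integral_norm_sq_eq_zero {X E : Type*} [TopologicalSpace X]
    [MeasurableSpace X] {μ : Measure X} [μ.IsOpenPosMeasure] [NormedAddCommGroup E] {F : X → E}
    (hF : Continuous F) (hint : Integrable (fun z => ‖F z‖ ^ 2) μ)
    (h : ∫ z, ‖F z‖ ^ 2 ∂μ = 0) : F = 0 := by
  have hae : (fun z => ‖F z‖ ^ 2) =ᵐ[μ] 0 :=
    (integral_eq_zero_iff_of_nonneg (fun z => by positivity) hint).mp h
  have hzero := (Continuous.ae_eq_iff_eq μ (by fun_prop) continuous_const).mp hae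
  funext z
  exact norm_eq_zero.mp ((pow_eq_zero_iff two_ne_zero).mp (congrFun hzero z))

lemma PhiF_eq_integral_norm_sq {n : ℕ} {f g : Rn n → Rn n → ℝ → ℂ}
    (hg : ∀ r, g 0 0 r = ∫ x, ∫ y, ((‖f x y r‖ ^ 2 : ℝ) : ℂ))
    (hint : Integrable fun z : (Rn n × Rn n) × ℝ => ‖f z.1.1 z.1.2 z.2‖ ^ 2) :
    PhiF g = ((∫ x, ∫ y, ∫ r, ‖f x y r‖ ^ 2 : ℝ) : ℂ) := by
  simp only [PhiF, hg]
  exact_mod_cast (integral_prod_prod_symm _ hint).symm.trans (integral_prod_prod _ hint)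

-- Instance search does not find these product Haar measures by itself.
instance (n : ℕ) : (volume : Measure (Rn n × Rn n)).IsAddHaarMeasure :=
  Measure.prod.instIsAddHaarMeasure _ _

instance (n : ℕ) : (volume : Measure ((Rn n × Rn n) × ℝ)).IsAddHaarMeasure :=
  Measure.prod.instIsAddHaarMeasure _ _

/-- φ(f*×f) = φ(f×f*) = ‖f‖₂²; in particular φ is a faithful positive trace on (𝒜,×,*) -/
theorem phi_trace {n : ℕ} (l : ℝ) (f : Rn n → Rn n → ℝ → ℂ) (hf : IsA f) :
    PhiF (tMul l (tStar l f) f) =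
      ((∫ x : Rn n, ∫ y : Rn n, ∫ r : ℝ, ‖f x y r‖ ^ 2 : ℝ) : ℂ) ∧
    PhiF (tMul l f (tStar l f)) =
      ((∫ x : Rn n, ∫ y : Rn n, ∫ r : ℝ, ‖f x y r‖ ^ 2 : ℝ) : ℂ) ∧
    (PhiF (tMul l (tStar l f) f) = 0 → f = 0) ∧
    (∀ g : Rn n → Rn n → ℝ → ℂ, IsA g →
      PhiF (tMul l f g) = PhiF (tMul l g f)) := by
  obtain ⟨⟨F, hF⟩, -⟩ := hf
  have hfF : (fun z : (Rn n × Rn n) × ℝ => f z.1.1 z.1.2 z.2) = F := funext fun z => hF _ _ _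
  have hint : Integrable fun z : (Rn n × Rn n) × ℝ => ‖f z.1.1 z.1.2 z.2‖ ^ 2 := by
    simpa only [← hfF] using (F.memLp 2).integrable_norm_pow two_ne_zero
  have hleft := PhiF_eq_integral_norm_sq (tStar_tMul_apply_zero_zero l f) hint
  refine ⟨hleft, PhiF_eq_integral_norm_sq (tMul_tStar_apply_zero_zero l f) hint, fun h0 => ?_,
    fun g _ => PhiF_tMul_comm l f g⟩
  rw [hleft, Complex.ofReal_eq_zero, ← integral_prod_prod _ hint] at h0
  have hf0 := (hfF ▸ F.continuous).eq_zero_of_integral_norm_sq_eq_zero hint h0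
  funext x y r
  exact congrFun hf0 ((x, y), r)
end
end

section
/- The operator U_A on ℋ ⊗ ℋ = L²((ℝⁿ×ℝⁿ×ℝ)²), defined by (U_A ξ)(x,y,r,x',y',r') = (e^{−λr'})ⁿ ē[η_λ(r') β(e^{−λr'}x, y' − e^{−λr'}y)] ξ(e^{−λr'}x, e^{−λr'}y, r+r', x'−e^{−λr'}x, y'−e^{−λr'}y, r'), is a unitary operator. -/
/-!
Write `a = e^{-λr'}`. Then `U_A ξ = φ · (ξ ∘ T)` with
`T (x, y, r, x', y', r') = (a x, a y, r + r', x' - a x, y' - a y, r')` and `|φ|² = a^{2n}`.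
For fixed `r'`, `T` is a translation in `r` composed with a shear and a dilation by `a` of
`(x, y, x', y')`, whose Jacobian is `a^{2n}`; by Fubini over `r'`, `T` carries the measure
`|φ|² dp` to `dp`, so `ξ ↦ φ · (ξ ∘ T)` preserves the `L²` norm. It is bijective because `T` is
and `φ` never vanishes.
-/
open MeasureTheory
noncomputable section

/-- functions of two triples of variables (elements of ℋ ⊗ ℋ, as functions) -/
abbrev F6 (n : ℕ) := Rn n → Rn n → ℝ → Rn n → Rn n → ℝ → ℂ

/-- the multiplicative unitary U_A -/
def Uop {n : ℕ} (l : ℝ) (ξ : F6 n) : F6 n :=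
  fun x y r x' y' r' =>
    (((Real.exp (-l * r')) ^ n : ℝ) : ℂ) *
      ebar (eta l r' * beta (Real.exp (-l * r') • x) (y' - Real.exp (-l * r') • y)) *
      ξ (Real.exp (-l * r') • x) (Real.exp (-l * r') • y) (r + r')
        (x' - Real.exp (-l * r') • x) (y' - Real.exp (-l * r') • y) r'

/-- uncurrying of a six-variable function -/
def unc6 {n : ℕ} (ξ : F6 n) :
    ((Rn n × Rn n) × ℝ) × ((Rn n × Rn n) × ℝ) → ℂ :=
  fun p => ξ p.1.1.1 p.1.1.2 p.1.2 p.2.1.1 p.2.1.2 p.2.2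

open Function Module
open scoped ENNReal NNReal

theorem bijective_mul_comp {α β K : Type*} [GroupWithZero K] {φ : α → K} (T : α ≃ β)
    (hφ : ∀ x, φ x ≠ 0) : Bijective fun (f : β → K) x => φ x * f (T x) := by
  refine ⟨fun f g hfg => ?_, fun h => ⟨fun y => (φ (T.symm y))⁻¹ * h (T.symm y), ?_⟩⟩
  · funext y
    simpa [hφ] using congrFun hfg (T.symm y)
  · funext x
    simp [mul_inv_cancel_left₀ (hφ x)]

section WeightedComposition

variable {α β : Type*} [MeasurableSpace α] [MeasurableSpace β] {μ : Measure α} {ν : Measure β}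
  {𝕜 : Type*} [RCLike 𝕜] {φ : α → 𝕜} {T : α ≃ᵐ β}

theorem lintegral_enorm_sq_mul_comp (hφ : Measurable φ)
    (hT : MeasurePreserving T (μ.withDensity fun x => ‖φ x‖ₑ ^ 2) ν) (f : β → 𝕜) :
    ∫⁻ x, ‖φ x * f (T x)‖ₑ ^ 2 ∂μ = ∫⁻ y, ‖f y‖ₑ ^ 2 ∂ν := by
  rw [← hT.lintegral_comp_emb T.measurableEmbedding,
    lintegral_withDensity_eq_lintegral_mul_non_measurable _ (by fun_prop) (.of_forall (by simp))]
  simp [enorm_mul, mul_pow]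

theorem integral_norm_sq_mul_comp (hφ : Measurable φ)
    (hT : MeasurePreserving T (μ.withDensity fun x => ‖φ x‖ₑ ^ 2) ν) (f : β → 𝕜) :
    ∫ x, ‖φ x * f (T x)‖ ^ 2 ∂μ = ∫ y, ‖f y‖ ^ 2 ∂ν := by
  have hT' : MeasurePreserving T (μ.withDensity fun x => ((‖φ x‖₊ ^ 2 : ℝ≥0) : ℝ≥0∞)) ν := by
    simpa [enorm] using hT
  rw [← hT'.integral_comp' , integral_withDensity_eq_integral_smul (by fun_prop)]
  simp [mul_pow, NNReal.smul_def]

theorem eLpNorm_two_mul_comp (hφ : Measurable φ)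
    (hT : MeasurePreserving T (μ.withDensity fun x => ‖φ x‖ₑ ^ 2) ν) (f : β → 𝕜) :
    eLpNorm (fun x => φ x * f (T x)) 2 μ = eLpNorm f 2 ν := by
  simp only [eLpNorm_eq_lintegral_rpow_enorm_toReal two_ne_zero ENNReal.ofNat_ne_top,
    ENNReal.toReal_ofNat, ENNReal.rpow_two, lintegral_enorm_sq_mul_comp hφ hT]

theorem memLp_two_mul_comp (hφ : Measurable φ) (hφ₀ : ∀ x, φ x ≠ 0)
    (hT : MeasurePreserving T (μ.withDensity fun x => ‖φ x‖ₑ ^ 2) ν) {f : β → 𝕜}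
    (hf : MemLp f 2 ν) : MemLp (fun x => φ x * f (T x)) 2 μ := by
  have hac : μ ≪ μ.withDensity fun x => ‖φ x‖ₑ ^ 2 :=
    withDensity_absolutelyContinuous' (by fun_prop) (.of_forall (by simpa using hφ₀))
  have hcomp : AEStronglyMeasurable (f ∘ T) μ :=
    ((hT.aestronglyMeasurable_comp_iff T.measurableEmbedding).2 hf.1).mono_ac hac
  exact ⟨hφ.aestronglyMeasurable.mul hcomp, by rw [eLpNorm_two_mul_comp hφ hT]; exact hf.2⟩

end WeightedComposition

section Shear

variable {E : Type*} [NormedAddCommGroup E] [NormedSpace ℝ E] [FiniteDimensional ℝ E]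
  [MeasurableSpace E] [BorelSpace E] (μ : Measure E) [μ.IsAddHaarMeasure]

theorem map_smul_shear {a : ℝ} (ha : a ≠ 0) (s : ℝ) :
    Measure.map (fun q : (E × ℝ) × E => ((a • q.1.1, q.1.2 + s), q.2 - a • q.1.1))
        ((μ.prod volume).prod μ) = (‖a‖ₑ ^ finrank ℝ E)⁻¹ • (μ.prod volume).prod μ := by
  have hshear : MeasurePreserving (fun q : (E × ℝ) × E => (q.1, q.2 - a • q.1.1))
      ((μ.prod volume).prod μ) ((μ.prod volume).prod μ) :=
    (MeasurePreserving.id _).skew_product (g := fun (h : E × ℝ) (z' : E) => z' - a • h.1)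
      (by fun_prop) (.of_forall fun _ => map_sub_right_eq_self μ _)
  have hscale : Measure.map (Prod.map (Prod.map (a • ·) (· + s)) id) ((μ.prod volume).prod μ)
      = (‖a‖ₑ ^ finrank ℝ E)⁻¹ • (μ.prod volume).prod μ := by
    rw [← Measure.map_prod_map _ _ (by fun_prop) measurable_id, ← Measure.map_prod_map _ _
      (by fun_prop) (by fun_prop), Measure.map_addHaar_smul μ ha, map_add_right_eq_self,
      Measure.map_id, Measure.prod_smul_left, Measure.prod_smul_left, ← Real.enorm_eq_ofReal_abs,
      enorm_inv (pow_ne_zero _ ha), enorm_pow]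
  rw [← hscale]
  conv_rhs => rw [← hshear.map_eq]
  rw [Measure.map_map (by fun_prop) hshear.measurable]
  rfl

variable {c : ℝ → ℝ}

def shearEquiv (hc : Measurable c) (hc₀ : ∀ t, c t ≠ 0) :
    (E × ℝ) × (E × ℝ) ≃ᵐ (E × ℝ) × (E × ℝ) where
  toFun p := ((c p.2.2 • p.1.1, p.1.2 + p.2.2), (p.2.1 - c p.2.2 • p.1.1, p.2.2))
  invFun p := (((c p.2.2)⁻¹ • p.1.1, p.1.2 - p.2.2), (p.2.1 + p.1.1, p.2.2))
  left_inv p := by simp [smul_smul, hc₀]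
  right_inv p := by simp [smul_smul, hc₀]
  measurable_toFun := by simp only [Equiv.coe_fn_mk]; fun_prop
  measurable_invFun := by simp only [Equiv.coe_fn_symm_mk]; fun_prop

theorem measurePreserving_shearEquiv (hc : Measurable c) (hc₀ : ∀ t, c t ≠ 0) :
    MeasurePreserving (shearEquiv hc hc₀)
      (((μ.prod volume).prod (μ.prod volume)).withDensity fun p => ‖c p.2.2‖ₑ ^ finrank ℝ E)
      ((μ.prod volume).prod (μ.prod volume)) := by
  set T := shearEquiv (E := E) hc hc₀
  refine ⟨T.measurable, Measure.ext_of_lintegral _ fun F hF => ?_⟩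
  have hassoc := measurePreserving_prodAssoc (μ.prod (volume : Measure ℝ)) μ (volume : Measure ℝ)
  set e := MeasurableEquiv.prodAssoc (α := E × ℝ) (β := E) (γ := ℝ)
  rw [lintegral_map hF T.measurable,
    lintegral_withDensity_eq_lintegral_mul_non_measurable _ (by fun_prop) (.of_forall (by simp)),
    ← hassoc.lintegral_comp_emb e.measurableEmbedding,
    ← hassoc.lintegral_comp_emb e.measurableEmbedding,
    lintegral_prod_symm' _ (by fun_prop), lintegral_prod_symm' _ (by fun_prop)]
  refine lintegral_congr fun t => ?_
  have hfib := map_smul_shear μ (hc₀ t) t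
  have hFt : Measurable fun q : (E × ℝ) × E => F (e (q, t)) := by fun_prop
  have hw : ‖c t‖ₑ ^ finrank ℝ E ≠ 0 := by simp [hc₀]
  have hw' : ‖c t‖ₑ ^ finrank ℝ E ≠ ∞ := by simp
  calc ∫⁻ q, ‖c t‖ₑ ^ finrank ℝ E * F (e (((c t • q.1.1, q.1.2 + t), q.2 - c t • q.1.1), t))
          ∂(μ.prod volume).prod μ
      = ‖c t‖ₑ ^ finrank ℝ E * ∫⁻ q, F (e (q, t))
          ∂Measure.map (fun q => ((c t • q.1.1, q.1.2 + t), q.2 - c t • q.1.1))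
            ((μ.prod volume).prod μ) := by
        rw [lintegral_const_mul' _ _ hw', lintegral_map hFt (by fun_prop)]
    _ = ∫⁻ q, F (e (q, t)) ∂(μ.prod volume).prod μ := by
        rw [hfib, lintegral_smul_measure, smul_eq_mul, ← mul_assoc,
          ENNReal.mul_inv_cancel hw hw', one_mul]

end Shear

theorem norm_ebar (t : ℝ) : ‖ebar t‖ = 1 := by
  rw [ebar, show -2 * Real.pi * (t : ℂ) * Complex.I = ((-2 * Real.pi * t : ℝ) : ℂ) * Complex.I by
    push_cast; ring]
  exact Complex.norm_exp_ofReal_mul_I _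

theorem unc6_bijective (n : ℕ) : Bijective (unc6 (n := n)) :=
  ⟨fun ξ ζ h => by
    funext x y r x' y' r'
    exact congrFun h (((x, y), r), ((x', y'), r')),
   fun g => ⟨fun x y r x' y' r' => g (((x, y), r), ((x', y'), r')), rfl⟩⟩

def uopPhase (n : ℕ) (l : ℝ) (p : ((Rn n × Rn n) × ℝ) × ((Rn n × Rn n) × ℝ)) : ℂ :=
  ((Real.exp (-l * p.2.2) ^ n : ℝ) : ℂ) *
    ebar (eta l p.2.2 * beta (Real.exp (-l * p.2.2) • p.1.1.1)
      (p.2.1.2 - Real.exp (-l * p.2.2) • p.1.1.2))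

def uopEquiv (n : ℕ) (l : ℝ) :
    ((Rn n × Rn n) × ℝ) × ((Rn n × Rn n) × ℝ) ≃ᵐ ((Rn n × Rn n) × ℝ) × ((Rn n × Rn n) × ℝ) :=
  shearEquiv (c := fun t => Real.exp (-l * t)) (by fun_prop) fun _ => (Real.exp_pos _).ne'

theorem unc6_Uop {n : ℕ} (l : ℝ) (ξ : F6 n) :
    unc6 (Uop l ξ) = fun p => uopPhase n l p * unc6 ξ (uopEquiv n l p) := rfl

theorem norm_uopPhase (n : ℕ) (l : ℝ) (p) : ‖uopPhase n l p‖ = Real.exp (-l * p.2.2) ^ n := by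
  rw [uopPhase, norm_mul, norm_ebar, mul_one, Complex.norm_real, Real.norm_eq_abs,
    abs_of_pos (by positivity)]

theorem uopPhase_ne_zero (n : ℕ) (l : ℝ) (p) : uopPhase n l p ≠ 0 :=
  norm_pos_iff.mp (norm_uopPhase n l p ▸ by positivity)

theorem measurable_uopPhase (n : ℕ) (l : ℝ) : Measurable (uopPhase n l) := by
  unfold uopPhase ebar eta beta
  fun_prop

theorem enorm_uopPhase_sq (n : ℕ) (l : ℝ) (p) :
    ‖uopPhase n l p‖ₑ ^ 2 = ‖Real.exp (-l * p.2.2)‖ₑ ^ finrank ℝ (Rn n × Rn n) := by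
  rw [← ofReal_norm, norm_uopPhase, Real.enorm_of_nonneg (Real.exp_pos _).le,
    ENNReal.ofReal_pow (Real.exp_pos _).le, ← pow_mul, finrank_prod, finrank_fin_fun, mul_two]

theorem measurePreserving_uopEquiv (n : ℕ) (l : ℝ) :
    MeasurePreserving (uopEquiv n l)
      (volume.withDensity fun p => ‖uopPhase n l p‖ₑ ^ 2) volume := by
  -- instance search does not find this product instance for `volume`
  have := Measure.prod.instIsAddHaarMeasure (volume : Measure (Rn n)) (volume : Measure (Rn n))
  simp_rw [enorm_uopPhase_sq]
  exact measurePreserving_shearEquiv ((volume : Measure (Rn n)).prod volume) _ _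

/-- U_A is a unitary operator on ℋ ⊗ ℋ = L²((ℝⁿ×ℝⁿ×ℝ)²) -/
theorem Uop_unitary (n : ℕ) (l : ℝ) :
    Function.Bijective (Uop (n := n) l) ∧
    ∀ ξ : F6 n, MemLp (unc6 ξ) 2 volume →
      MemLp (unc6 (Uop l ξ)) 2 volume ∧
      (∫ p, ‖unc6 (Uop l ξ) p‖ ^ 2) = ∫ p, ‖unc6 ξ p‖ ^ 2 := by
  have hT := measurePreserving_uopEquiv n l
  refine ⟨?_, fun ξ hξ => ?_⟩
  · rw [← (unc6_bijective n).of_comp_iff']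
    exact (bijective_mul_comp (uopEquiv n l).toEquiv (uopPhase_ne_zero n l)).comp
      (unc6_bijective n)
  · rw [unc6_Uop]
    exact ⟨memLp_two_mul_comp (measurable_uopPhase n l) (uopPhase_ne_zero n l) hT hξ,
      integral_norm_sq_mul_comp (measurable_uopPhase n l) hT _⟩
end
end

section
/- For Schwartz functions f, g (in variables (x,y,r), compactly supported in r), the operators ρ_f and λ_g on ℋ = L²(ℝⁿ×ℝⁿ×ℝ), defined by (ρ_f ζ)(x,y,r) = ∫ (e^{λr̃})ⁿ f(x,y,r̃) ζ(e^{λr̃}x, e^{λr̃}y, r−r̃) dr̃ and (λ_g ζ)(x,y,r) = ∫ g(e^{λr̃}x, e^{λr̃}y, r−r̃) ζ(x,y,r̃) dr̃, commute: ρ_f λ_g = λ_g ρ_f. -/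
open MeasureTheory
noncomputable section

/-- ρ_f -/
def rhoOp {n : ℕ} (l : ℝ) (f ζ : Rn n → Rn n → ℝ → ℂ) : Rn n → Rn n → ℝ → ℂ :=
  fun x y r => ∫ rt : ℝ, (((Real.exp (l * rt)) ^ n : ℝ) : ℂ) * f x y rt *
    ζ (Real.exp (l * rt) • x) (Real.exp (l * rt) • y) (r - rt)

/-- λ_g -/
def lamOp {n : ℕ} (l : ℝ) (g ζ : Rn n → Rn n → ℝ → ℂ) : Rn n → Rn n → ℝ → ℂ :=
  fun x y r => ∫ rt : ℝ,
    g (Real.exp (l * rt) • x) (Real.exp (l * rt) • y) (r - rt) * ζ x y rt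

/-- ρ_f and λ_g commute -/
theorem rho_lam_commute {n : ℕ} (l : ℝ) (f g : Rn n → Rn n → ℝ → ℂ)
    (hf : IsA f) (hg : IsA g) (ζ : Rn n → Rn n → ℝ → ℂ) (hζ : CC ζ) :
    rhoOp l f (lamOp l g ζ) = lamOp l g (rhoOp l f ζ) := by
  obtain ⟨⟨F, hF⟩, ⟨C, hC⟩⟩ := hf
  obtain ⟨⟨G, hG⟩, -⟩ := hg
  obtain ⟨hζc, hζs⟩ := hζ
  -- bound on the r-support of ζ
  obtain ⟨R, hRsub⟩ := hζs.isBounded.subset_closedBall 0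
  have hR : ∀ a b t, ζ a b t ≠ 0 → |t| ≤ R := by
    intro a b t ht
    have hmem : ((a, b), t) ∈ tsupport (fun p : (Rn n × Rn n) × ℝ => ζ p.1.1 p.1.2 p.2) :=
      subset_tsupport _ ht
    have h1 := hRsub hmem
    rw [Metric.mem_closedBall, dist_zero_right] at h1
    have h2 : ‖t‖ ≤ ‖((a, b), t)‖ := norm_snd_le ((a, b), t)
    rw [Real.norm_eq_abs] at h2
    exact h2.trans h1
  -- continuity facts
  have hgc : Continuous (fun p : (Rn n × Rn n) × ℝ => g p.1.1 p.1.2 p.2) := by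
    have h : (fun p : (Rn n × Rn n) × ℝ => g p.1.1 p.1.2 p.2) = fun p => G ((p.1.1, p.1.2), p.2) := by
      funext p; exact hG _ _ _
    rw [h]
    exact G.continuous.comp (by fun_prop)
  funext x y r
  have hfc : Continuous (fun t : ℝ => f x y t) := by
    have h : (fun t : ℝ => f x y t) = fun t => F ((x, y), t) := by funext t; exact hF _ _ _
    rw [h]
    exact F.continuous.comp (by fun_prop)
  -- the double integrand
  set Φ : ℝ × ℝ → ℂ := fun p =>
    (((Real.exp (l * p.1)) ^ n : ℝ) : ℂ) * f x y p.1 *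
      (g (Real.exp (l * p.2) • x) (Real.exp (l * p.2) • y) (r - p.2) *
        ζ (Real.exp (l * p.1) • x) (Real.exp (l * p.1) • y) (p.2 - p.1)) with hΦ
  have hmap1 : Continuous (fun p : ℝ × ℝ =>
      (((Real.exp (l * p.2) • x : Rn n), (Real.exp (l * p.2) • y : Rn n)), r - p.2)) := by
    fun_prop
  have hmap2 : Continuous (fun p : ℝ × ℝ =>
      (((Real.exp (l * p.1) • x : Rn n), (Real.exp (l * p.1) • y : Rn n)), p.2 - p.1)) := by
    fun_prop
  have hΦc : Continuous Φ := by
    apply Continuous.mul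
    · apply Continuous.mul
      · fun_prop
      · exact hfc.comp continuous_fst
    exact (hgc.comp hmap1).mul (hζc.comp hmap2)
  have hΦsupp : HasCompactSupport Φ := by
    apply HasCompactSupport.intro
      ((isCompact_closedBall (0 : ℝ) C).prod (isCompact_closedBall (0 : ℝ) (C + R)))
    intro p hp
    by_contra hne
    apply hp
    have h1 : f x y p.1 ≠ 0 := fun h0 => hne (by simp [hΦ, h0])
    have h2 : ζ (Real.exp (l * p.1) • x) (Real.exp (l * p.1) • y) (p.2 - p.1) ≠ 0 :=
      fun h0 => hne (by simp [hΦ, h0])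
    have hb1 := hC x y p.1 h1
    have hb2 := hR _ _ _ h2
    have hb3 : |p.2| ≤ |p.2 - p.1| + |p.1| := by
      calc |p.2| = |(p.2 - p.1) + p.1| := by ring_nf
        _ ≤ |p.2 - p.1| + |p.1| := abs_add_le _ _
    constructor <;> simp only [Metric.mem_closedBall, Real.dist_eq, sub_zero] <;> linarith
  have hΦint : MeasureTheory.Integrable Φ := hΦc.integrable_of_hasCompactSupport hΦsupp
  have hswap : (∫ rt : ℝ, ∫ u : ℝ, Φ (rt, u)) = ∫ u : ℝ, ∫ rt : ℝ, Φ (rt, u) := by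
    apply MeasureTheory.integral_integral_swap
    rw [MeasureTheory.Measure.volume_eq_prod] at hΦint
    exact hΦint
  show rhoOp l f (lamOp l g ζ) x y r = lamOp l g (rhoOp l f ζ) x y r
  have lhs_eq : rhoOp l f (lamOp l g ζ) x y r = ∫ rt : ℝ, ∫ u : ℝ, Φ (rt, u) := by
    unfold rhoOp lamOp
    refine MeasureTheory.integral_congr_ae (Filter.Eventually.of_forall fun rt => ?_)
    dsimp only
    have hinner : (∫ s : ℝ,
        g (Real.exp (l * s) • Real.exp (l * rt) • x) (Real.exp (l * s) • Real.exp (l * rt) • y)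
          (r - rt - s) * ζ (Real.exp (l * rt) • x) (Real.exp (l * rt) • y) s) =
        ∫ u : ℝ, g (Real.exp (l * u) • x) (Real.exp (l * u) • y) (r - u) *
            ζ (Real.exp (l * rt) • x) (Real.exp (l * rt) • y) (u - rt) := by
      rw [← MeasureTheory.integral_add_right_eq_self (fun u : ℝ =>
        g (Real.exp (l * u) • x) (Real.exp (l * u) • y) (r - u) *
          ζ (Real.exp (l * rt) • x) (Real.exp (l * rt) • y) (u - rt)) rt]
      refine MeasureTheory.integral_congr_ae (Filter.Eventually.of_forall fun s => ?_)
      dsimp only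
      rw [smul_smul, smul_smul, ← Real.exp_add,
        show l * s + l * rt = l * (s + rt) by ring,
        show r - rt - s = r - (s + rt) by ring,
        show s + rt - rt = s by ring]
    rw [hinner, ← MeasureTheory.integral_const_mul]
  have rhs_eq : lamOp l g (rhoOp l f ζ) x y r = ∫ u : ℝ, ∫ rt : ℝ, Φ (rt, u) := by
    unfold rhoOp lamOp
    refine MeasureTheory.integral_congr_ae (Filter.Eventually.of_forall fun u => ?_)
    dsimp only
    rw [← MeasureTheory.integral_const_mul]
    refine MeasureTheory.integral_congr_ae (Filter.Eventually.of_forall fun rt => ?_)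
    dsimp only
    rw [hΦ]
    ring
  rw [lhs_eq, hswap, ← rhs_eq]
end
end
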